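/- With the notation of the parameterized matrix W^k_λ(z) for a finite stochastic game, the equation val W^k_λ(z) = 0 has exactly one real solution z, and this solution equals the λ-discounted value v^k_λ of the stochastic game starting at state k. -/

import Mathlib

/-- The minimax value of a matrix game over mixed strategies (simplices). -/
noncomputable def matVal {α β : Type*} [Fintype α] [Fintype β]
    (M : Matrix α β ℝ) : ℝ :=
  ⨆ s : stdSimplex ℝ α, ⨅ t : stdSimplex ℝ β, ∑ a, ∑ b, s.1 a * M a b * t.1 b

/-- Transition matrix induced by a pure stationary strategy pair. -/
def Qpure {n : ℕ} {I J : Type} (q : Fin n → I → J → Fin n → ℝ)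
    (bi : Fin n → I) (bj : Fin n → J) : Matrix (Fin n) (Fin n) ℝ :=
  Matrix.of fun ℓ ℓ' => q ℓ (bi ℓ) (bj ℓ) ℓ'

/-- `d^0_λ(𝐢,𝐣) = det (Id - (1-λ) Q(𝐢,𝐣))`. -/
noncomputable def d0 {n : ℕ} {I J : Type} (q : Fin n → I → J → Fin n → ℝ)
    (lam : ℝ) (bi : Fin n → I) (bj : Fin n → J) : ℝ :=
  ((1 : Matrix (Fin n) (Fin n) ℝ) - (1 - lam) • Qpure q bi bj).det

/-- `d^k_λ(𝐢,𝐣)`: the same determinant with the `k`-th column replaced by `λ g(𝐢,𝐣)`. -/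
noncomputable def dk {n : ℕ} {I J : Type} (g : Fin n → I → J → ℝ)
    (q : Fin n → I → J → Fin n → ℝ) (k : Fin n) (lam : ℝ)
    (bi : Fin n → I) (bj : Fin n → J) : ℝ :=
  (Matrix.updateCol ((1 : Matrix (Fin n) (Fin n) ℝ) - (1 - lam) • Qpure q bi bj) k
    (lam • fun ℓ => g ℓ (bi ℓ) (bj ℓ))).det

/-- The parameterized matrix `W^k_λ(z)` with entries `d^k_λ(𝐢,𝐣) - z d^0_λ(𝐢,𝐣)` over
pure stationary strategy pairs. -/
noncomputable def Wmat {n : ℕ} {I J : Type} (g : Fin n → I → J → ℝ)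
    (q : Fin n → I → J → Fin n → ℝ) (k : Fin n) (lam z : ℝ) :
    Matrix (Fin n → I) (Fin n → J) ℝ :=
  Matrix.of fun bi bj => dk g q k lam bi bj - z * d0 q lam bi bj

/-- The Shapley operator of the game. -/
noncomputable def shapley {n : ℕ} {I J : Type} [Fintype I] [Fintype J]
    (g : Fin n → I → J → ℝ) (q : Fin n → I → J → Fin n → ℝ)
    (lam : ℝ) (u : Fin n → ℝ) : Fin n → ℝ :=
  fun ℓ => matVal (Matrix.of fun i j =>
    lam * g ℓ i j + (1 - lam) * ∑ ℓ', q ℓ i j ℓ' * u ℓ')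

/-!
At `z = v k` an entry of `W^k_λ(z)` is, by Cramer's rule, the determinant of `1 - (1-λ) Q(𝐢,𝐣)`
with its `k`-th column replaced by the excess payoffs `λ g + (1-λ) Q v - v` of the one-shot games
whose values define the Shapley operator. Row `ℓ` of that matrix depends only on the actions
played at state `ℓ`, so averaging these determinants against a product of stationary mixed
strategies averages the rows. Against the optimal strategies of the one-shot games the averaged
column has a sign, and `1 - (1-λ) Q̄` is an M-matrix (a minimum principle makes its inverse
nonnegative and a continuity argument its determinant positive), so the averaged determinant has
that sign too. Hence both players guarantee `0` in `W^k_λ(v k)`. Since `d^0_λ > 0`, the value of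
`W^k_λ(z)` is strictly decreasing in `z`, which gives uniqueness.
-/

open Finset Matrix

section MatrixGame

variable {α β : Type*} [Fintype α] [Fintype β]

theorem le_dotProduct_of_mem_stdSimplex {f t : β → ℝ} {c : ℝ} (ht : t ∈ stdSimplex ℝ β)
    (h : ∀ b, c ≤ f b) : c ≤ f ⬝ᵥ t :=
  calc c = ∑ b, c * t b := by rw [← mul_sum, ht.2, mul_one]
    _ ≤ f ⬝ᵥ t := sum_le_sum fun b _ => mul_le_mul_of_nonneg_right (h b) (ht.1 b)

theorem dotProduct_le_of_mem_stdSimplex {f t : β → ℝ} {c : ℝ} (ht : t ∈ stdSimplex ℝ β)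
    (h : ∀ b, f b ≤ c) : f ⬝ᵥ t ≤ c :=
  calc f ⬝ᵥ t ≤ ∑ b, c * t b :=
        sum_le_sum fun b _ => mul_le_mul_of_nonneg_right (h b) (ht.1 b)
    _ = c := by rw [← mul_sum, ht.2, mul_one]

variable (M : Matrix α β ℝ)

theorem matVal_eq_iSup_iInf :
    matVal M = ⨆ s : stdSimplex ℝ α, ⨅ t : stdSimplex ℝ β, s.1 ⬝ᵥ M *ᵥ t.1 := by
  simp only [matVal, dotProduct, mulVec, mul_sum, mul_assoc]

variable [Nonempty α] [Nonempty β]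

theorem exists_isSaddlePointOn_stdSimplex : ∃ t ∈ stdSimplex ℝ β, ∃ s ∈ stdSimplex ℝ α,
    IsSaddlePointOn (stdSimplex ℝ β) (stdSimplex ℝ α) (fun t s => s ⬝ᵥ M *ᵥ t) t s := by
  classical
  have hΔα := convex_stdSimplex ℝ α
  have hΔβ := convex_stdSimplex ℝ β
  have hcont : Continuous fun p : (α → ℝ) × (β → ℝ) => p.1 ⬝ᵥ M *ᵥ p.2 := by fun_prop
  refine Sion.exists_isSaddlePointOn (Set.nonempty_coe_sort.mp inferInstance) hΔβ
    (isCompact_stdSimplex ℝ β) (fun s _ => ?_) (fun s _ => ?_) hΔα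
    (Set.nonempty_coe_sort.mp inferInstance) (isCompact_stdSimplex ℝ α) (fun t _ => ?_)
    (fun t _ => ?_)
  · exact (hcont.comp (Continuous.prodMk_right s)).lowerSemicontinuous.lowerSemicontinuousOn _
  · rw [show (fun t => s ⬝ᵥ M *ᵥ t) = toLinearMap₂' ℝ M s from
      funext fun t => (toLinearMap₂'_apply' M s t).symm]
    exact ((toLinearMap₂' ℝ M s).convexOn hΔβ).quasiconvexOn
  · exact (hcont.comp (Continuous.prodMk_left t)).upperSemicontinuous.upperSemicontinuousOn _
  · rw [show (fun s => s ⬝ᵥ M *ᵥ t) = (toLinearMap₂' ℝ M).flip t from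
      funext fun s => (toLinearMap₂'_apply' M s t).symm]
    exact (((toLinearMap₂' ℝ M).flip t).concaveOn hΔα).quasiconcaveOn

theorem matVal_eq_of_isSaddlePointOn {s : α → ℝ} {t : β → ℝ} (hs : s ∈ stdSimplex ℝ α)
    (ht : t ∈ stdSimplex ℝ β)
    (h : IsSaddlePointOn (stdSimplex ℝ β) (stdSimplex ℝ α) (fun t s => s ⬝ᵥ M *ᵥ t) t s) :
    matVal M = s ⬝ᵥ M *ᵥ t := by
  have hbdd (s' : stdSimplex ℝ α) :
      BddBelow (Set.range fun t' : stdSimplex ℝ β => s'.1 ⬝ᵥ M *ᵥ t'.1) := by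
    rw [← Set.image_eq_range (fun t' => s'.1 ⬝ᵥ M *ᵥ t')]
    exact (isCompact_stdSimplex ℝ β).bddBelow_image (by fun_prop)
  have hle (s' : stdSimplex ℝ α) : ⨅ t' : stdSimplex ℝ β, s'.1 ⬝ᵥ M *ᵥ t'.1 ≤ s ⬝ᵥ M *ᵥ t :=
    (ciInf_le (hbdd s') ⟨t, ht⟩).trans (h t ht s' s'.2)
  rw [matVal_eq_iSup_iInf]
  refine le_antisymm (ciSup_le hle) ?_
  exact le_ciSup_of_le ⟨_, Set.forall_mem_range.2 hle⟩ ⟨s, hs⟩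
    (le_ciInf fun t' => h t'.1 t'.2 s hs)

theorem exists_optimal_strategies : ∃ s ∈ stdSimplex ℝ α, ∃ t ∈ stdSimplex ℝ β,
    (∀ b, matVal M ≤ (s ᵥ* M) b) ∧ ∀ a, (M *ᵥ t) a ≤ matVal M := by
  classical
  obtain ⟨t, ht, s, hs, h⟩ := exists_isSaddlePointOn_stdSimplex M
  refine ⟨s, hs, t, ht, fun b => ?_, fun a => ?_⟩
  · have : s ⬝ᵥ M *ᵥ t ≤ s ⬝ᵥ M *ᵥ Pi.single b 1 := h _ (single_mem_stdSimplex ℝ b) s hs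
    rwa [dotProduct_mulVec s M (Pi.single b 1), dotProduct_single, mul_one,
      ← matVal_eq_of_isSaddlePointOn M hs ht h] at this
  · have : Pi.single a 1 ⬝ᵥ M *ᵥ t ≤ s ⬝ᵥ M *ᵥ t := h t ht _ (single_mem_stdSimplex ℝ a)
    rwa [single_dotProduct, one_mul, ← matVal_eq_of_isSaddlePointOn M hs ht h] at this

variable {M}

theorem le_matVal {s : α → ℝ} {c : ℝ} (hs : s ∈ stdSimplex ℝ α) (h : ∀ b, c ≤ (s ᵥ* M) b) :
    c ≤ matVal M := by
  obtain ⟨-, -, t, ht, -, hopt⟩ := exists_optimal_strategies M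
  calc c ≤ (s ᵥ* M) ⬝ᵥ t := le_dotProduct_of_mem_stdSimplex ht h
    _ = (M *ᵥ t) ⬝ᵥ s := by rw [← dotProduct_mulVec, dotProduct_comm]
    _ ≤ matVal M := dotProduct_le_of_mem_stdSimplex hs hopt

theorem matVal_le {t : β → ℝ} {c : ℝ} (ht : t ∈ stdSimplex ℝ β) (h : ∀ a, (M *ᵥ t) a ≤ c) :
    matVal M ≤ c := by
  obtain ⟨s, hs, -, -, hopt, -⟩ := exists_optimal_strategies M
  calc matVal M ≤ (s ᵥ* M) ⬝ᵥ t := le_dotProduct_of_mem_stdSimplex ht hopt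
    _ = (M *ᵥ t) ⬝ᵥ s := by rw [← dotProduct_mulVec, dotProduct_comm]
    _ ≤ c := dotProduct_le_of_mem_stdSimplex hs h

theorem matVal_lt_matVal {M' : Matrix α β ℝ} (h : ∀ a b, M' a b < M a b) :
    matVal M' < matVal M := by
  obtain ⟨p, -, hp⟩ :=
    exists_min_image univ (fun p : α × β => M p.1 p.2 - M' p.1 p.2) univ_nonempty
  set δ := M p.1 p.2 - M' p.1 p.2
  obtain ⟨-, -, t, ht, -, hopt⟩ := exists_optimal_strategies M
  have hgap : matVal M' ≤ matVal M - δ := matVal_le ht fun a => by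
    have hδ : (M' a - M a) ⬝ᵥ t ≤ -δ := dotProduct_le_of_mem_stdSimplex ht fun b => by
      simp only [Pi.sub_apply]
      linarith [hp (a, b) (mem_univ _)]
    have hM : M a ⬝ᵥ t ≤ matVal M := hopt a
    show M' a ⬝ᵥ t ≤ matVal M - δ
    rw [sub_dotProduct] at hδ
    linarith
  linarith [h p.1 p.2]

end MatrixGame

section DiscountedMarkovChain

variable {ι : Type*} [Fintype ι] [DecidableEq ι]

theorem det_updateCol_mulVec {R : Type*} [CommRing R] (A : Matrix ι ι R) (k : ι) (w : ι → R) :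
    (A.updateCol k (A *ᵥ w)).det = w k * A.det := by
  rw [← smul_eq_mul, ← det_updateCol_sum]
  congr 2
  ext k'
  simp [mulVec, dotProduct, mul_comm]

theorem det_updateCol_sub_mulVec {R : Type*} [CommRing R] (A : Matrix ι ι R) (k : ι)
    (b v : ι → R) : (A.updateCol k (b - A *ᵥ v)).det = (A.updateCol k b).det - v k * A.det := by
  rw [sub_eq_add_neg, det_updateCol_add, ← neg_one_smul R (A *ᵥ v), det_updateCol_smul,
    det_updateCol_mulVec]
  ring

variable {P : Matrix ι ι ℝ} {r : ℝ}

theorem nonneg_of_one_sub_smul_mulVec_nonneg (hP : P ∈ rowStochastic ℝ ι) (hr0 : 0 ≤ r)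
    (hr1 : r < 1) {w : ι → ℝ} (h : ∀ i, 0 ≤ ((1 - r • P) *ᵥ w) i) (i : ι) : 0 ≤ w i := by
  obtain ⟨i₀, -, hmin⟩ := exists_min_image univ w ⟨i, mem_univ i⟩
  have hrow : P i₀ ∈ stdSimplex ℝ ι :=
    ⟨fun _ => nonneg_of_mem_rowStochastic hP, sum_row_of_mem_rowStochastic hP i₀⟩
  have hPw : w i₀ ≤ (P *ᵥ w) i₀ := by
    rw [mulVec, dotProduct_comm]
    exact le_dotProduct_of_mem_stdSimplex hrow fun j => hmin j (mem_univ j)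
  have h₀ := h i₀
  simp only [sub_mulVec, one_mulVec, smul_mulVec, Pi.sub_apply, Pi.smul_apply, smul_eq_mul] at h₀
  have : 0 ≤ w i₀ := by nlinarith [mul_nonneg hr0 (sub_nonneg.2 hPw)]
  exact this.trans (hmin i (mem_univ i))

theorem det_one_sub_smul_ne_zero (hP : P ∈ rowStochastic ℝ ι) (hr0 : 0 ≤ r) (hr1 : r < 1) :
    (1 - r • P).det ≠ 0 := by
  intro h
  obtain ⟨w, hw, hAw⟩ := exists_mulVec_eq_zero_iff.mpr h
  refine hw (funext fun i => le_antisymm ?_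
    (nonneg_of_one_sub_smul_mulVec_nonneg hP hr0 hr1 (by simp [hAw]) i))
  simpa using nonneg_of_one_sub_smul_mulVec_nonneg hP hr0 hr1 (w := -w)
    (by simp [mulVec_neg, hAw]) i

theorem det_one_sub_smul_pos (hP : P ∈ rowStochastic ℝ ι) (hr0 : 0 ≤ r) (hr1 : r < 1) :
    0 < (1 - r • P).det := by
  -- `t ↦ det (1 - t • P)` equals `1` at `t = 0` and does not vanish on `[0, r]`.
  by_contra! h
  have hcont : ContinuousOn (fun t : ℝ => (1 - t • P).det) (Set.Icc 0 r) := by fun_prop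
  obtain ⟨t, ht, ht0⟩ := intermediate_value_Icc' hr0 hcont ⟨h, by simp⟩
  exact det_one_sub_smul_ne_zero hP ht.1 (ht.2.trans_lt hr1) ht0

theorem det_updateCol_one_sub_smul_nonneg (hP : P ∈ rowStochastic ℝ ι) (hr0 : 0 ≤ r)
    (hr1 : r < 1) {u : ι → ℝ} (hu : ∀ i, 0 ≤ u i) (k : ι) :
    0 ≤ ((1 - r • P).updateCol k u).det := by
  set A := 1 - r • P
  have hA : IsUnit A.det := (det_one_sub_smul_ne_zero hP hr0 hr1).isUnit
  have hu' : u = A *ᵥ (A⁻¹ *ᵥ u) := by rw [mulVec_mulVec, mul_nonsing_inv A hA, one_mulVec]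
  rw [hu', det_updateCol_mulVec]
  exact mul_nonneg (nonneg_of_one_sub_smul_mulVec_nonneg hP hr0 hr1 (by rwa [← hu']) k)
    (det_one_sub_smul_pos hP hr0 hr1).le

theorem det_updateCol_one_sub_smul_nonpos (hP : P ∈ rowStochastic ℝ ι) (hr0 : 0 ≤ r)
    (hr1 : r < 1) {u : ι → ℝ} (hu : ∀ i, u i ≤ 0) (k : ι) :
    ((1 - r • P).updateCol k u).det ≤ 0 := by
  have := det_updateCol_one_sub_smul_nonneg hP hr0 hr1 (u := -u) (fun i => by simpa using hu i) k
  rwa [← neg_one_smul ℝ u, det_updateCol_smul, neg_one_mul, neg_nonneg] at this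

end DiscountedMarkovChain

section MixedStationaryStrategies

variable {ι A : Type*} [Fintype ι] [DecidableEq ι] [Fintype A]

theorem prod_mem_stdSimplex {y : ι → A → ℝ} (hy : ∀ ℓ, y ℓ ∈ stdSimplex ℝ A) :
    (fun σ : ι → A => ∏ ℓ, y ℓ (σ ℓ)) ∈ stdSimplex ℝ (ι → A) :=
  ⟨fun σ => prod_nonneg fun ℓ _ => (hy ℓ).1 _, by
    rw [← Fintype.prod_sum, prod_eq_one fun ℓ _ => (hy ℓ).2]⟩

theorem sum_prod_mul_det_of_rows {R : Type*} [CommRing R] (v : ι → A → ι → R)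
    (y : ι → A → R) :
    ∑ σ : ι → A, (∏ ℓ, y ℓ (σ ℓ)) * (of fun ℓ => v ℓ (σ ℓ)).det =
      (of fun ℓ => ∑ a, y ℓ a • v ℓ a).det := by
  change _ = detRowAlternating.toMultilinearMap (fun ℓ => ∑ a, y ℓ a • v ℓ a)
  rw [MultilinearMap.map_sum]
  refine sum_congr rfl fun σ _ => ?_
  rw [MultilinearMap.map_smul_univ]
  rfl

theorem sum_prod_mul_det_updateCol_one_sub_smul {y : ι → A → ℝ} (hy : ∀ ℓ, ∑ a, y ℓ a = 1)
    (r : ℝ) (p : ι → A → ι → ℝ) (c : ι → A → ℝ) (k : ι) :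
    ∑ σ : ι → A, (∏ ℓ, y ℓ (σ ℓ)) *
        ((1 - r • of fun ℓ ℓ' => p ℓ (σ ℓ) ℓ').updateCol k fun ℓ => c ℓ (σ ℓ)).det =
      ((1 - r • of fun ℓ ℓ' => ∑ a, y ℓ a * p ℓ a ℓ').updateCol k
        fun ℓ => ∑ a, y ℓ a * c ℓ a).det := by
  let row : ι → A → ι → ℝ := fun ℓ a ℓ' =>
    if ℓ' = k then c ℓ a else (1 : Matrix ι ι ℝ) ℓ ℓ' - r * p ℓ a ℓ'
  have hrow (σ : ι → A) : ((1 - r • of fun ℓ ℓ' => p ℓ (σ ℓ) ℓ').updateCol k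
      fun ℓ => c ℓ (σ ℓ)) = of fun ℓ => row ℓ (σ ℓ) := by
    ext ℓ ℓ'
    simp [row, updateCol_apply]
  simp_rw [hrow, sum_prod_mul_det_of_rows]
  congr 1
  ext ℓ ℓ'
  by_cases hk : ℓ' = k
  · simp [row, hk, Finset.sum_apply]
  · simp [row, hk, Finset.sum_apply, mul_sub, sum_sub_distrib,
      ← sum_mul, hy, mul_sum, mul_left_comm]

theorem mixedTransition_mem_rowStochastic {p : ι → A → ι → ℝ}
    (hp : ∀ ℓ a, p ℓ a ∈ stdSimplex ℝ ι) {y : ι → A → ℝ} (hy : ∀ ℓ, y ℓ ∈ stdSimplex ℝ A) :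
    (of fun ℓ ℓ' => ∑ a, y ℓ a * p ℓ a ℓ') ∈ rowStochastic ℝ ι := by
  refine mem_rowStochastic_iff_sum.2
    ⟨fun ℓ ℓ' => sum_nonneg fun a _ => mul_nonneg ((hy ℓ).1 a) ((hp ℓ a).1 ℓ'), fun ℓ => ?_⟩
  simp only [of_apply]
  rw [sum_comm]
  simp [← mul_sum, (hp _ _).2, (hy ℓ).2]

variable {p : ι → A → ι → ℝ} {y : ι → A → ℝ} {r : ℝ} {c : ι → A → ℝ}

theorem sum_prod_mul_det_updateCol_nonneg (hp : ∀ ℓ a, p ℓ a ∈ stdSimplex ℝ ι)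
    (hy : ∀ ℓ, y ℓ ∈ stdSimplex ℝ A) (hr0 : 0 ≤ r) (hr1 : r < 1)
    (hc : ∀ ℓ, 0 ≤ ∑ a, y ℓ a * c ℓ a) (k : ι) :
    0 ≤ ∑ σ : ι → A, (∏ ℓ, y ℓ (σ ℓ)) *
        ((1 - r • of fun ℓ ℓ' => p ℓ (σ ℓ) ℓ').updateCol k fun ℓ => c ℓ (σ ℓ)).det := by
  rw [sum_prod_mul_det_updateCol_one_sub_smul fun ℓ => (hy ℓ).2]
  exact det_updateCol_one_sub_smul_nonneg (mixedTransition_mem_rowStochastic hp hy) hr0 hr1 hc k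

theorem sum_prod_mul_det_updateCol_nonpos (hp : ∀ ℓ a, p ℓ a ∈ stdSimplex ℝ ι)
    (hy : ∀ ℓ, y ℓ ∈ stdSimplex ℝ A) (hr0 : 0 ≤ r) (hr1 : r < 1)
    (hc : ∀ ℓ, ∑ a, y ℓ a * c ℓ a ≤ 0) (k : ι) :
    ∑ σ : ι → A, (∏ ℓ, y ℓ (σ ℓ)) *
        ((1 - r • of fun ℓ ℓ' => p ℓ (σ ℓ) ℓ').updateCol k fun ℓ => c ℓ (σ ℓ)).det ≤ 0 := by
  rw [sum_prod_mul_det_updateCol_one_sub_smul fun ℓ => (hy ℓ).2]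
  exact det_updateCol_one_sub_smul_nonpos (mixedTransition_mem_rowStochastic hp hy) hr0 hr1 hc k

end MixedStationaryStrategies

section StochasticGame

variable {n : ℕ} {I J : Type}

/-- The one-shot game whose value is `shapley g q lam u ℓ`. -/
def localGame (g : Fin n → I → J → ℝ) (q : Fin n → I → J → Fin n → ℝ) (lam : ℝ)
    (u : Fin n → ℝ) (ℓ : Fin n) : Matrix I J ℝ :=
  of fun i j => lam * g ℓ i j + (1 - lam) * ∑ ℓ', q ℓ i j ℓ' * u ℓ'

variable {g : Fin n → I → J → ℝ} {q : Fin n → I → J → Fin n → ℝ} {lam : ℝ}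

theorem Qpure_mem_rowStochastic (hq : ∀ ℓ i j, q ℓ i j ∈ stdSimplex ℝ (Fin n))
    (bi : Fin n → I) (bj : Fin n → J) : Qpure q bi bj ∈ rowStochastic ℝ (Fin n) :=
  mem_rowStochastic_iff_sum.2 ⟨fun _ ℓ' => (hq _ _ _).1 ℓ', fun _ => (hq _ _ _).2⟩

theorem d0_pos (hq : ∀ ℓ i j, q ℓ i j ∈ stdSimplex ℝ (Fin n)) (hl0 : 0 < lam) (hl1 : lam ≤ 1)
    (bi : Fin n → I) (bj : Fin n → J) : 0 < d0 q lam bi bj :=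
  det_one_sub_smul_pos (Qpure_mem_rowStochastic hq bi bj) (by linarith) (by linarith)

theorem Wmat_apply_eq_det (k : Fin n) (v : Fin n → ℝ) (bi : Fin n → I) (bj : Fin n → J) :
    Wmat g q k lam (v k) bi bj = ((1 - (1 - lam) • Qpure q bi bj).updateCol k
      fun ℓ => localGame g q lam v ℓ (bi ℓ) (bj ℓ) - v ℓ).det := by
  rw [Wmat, of_apply, dk, d0, ← det_updateCol_sub_mulVec]
  congr 2
  ext ℓ
  simp only [localGame, Qpure, sub_mulVec, one_mulVec, smul_mulVec, mulVec, dotProduct, of_apply,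
    Pi.sub_apply, Pi.smul_apply, smul_eq_mul, mul_sum]
  ring

theorem mulVec_Wmat_nonpos [Fintype J] (hq : ∀ ℓ i j, q ℓ i j ∈ stdSimplex ℝ (Fin n))
    (hl0 : 0 < lam) (hl1 : lam ≤ 1) (k : Fin n) (v : Fin n → ℝ) {y : Fin n → J → ℝ}
    (hy : ∀ ℓ, y ℓ ∈ stdSimplex ℝ J) (hy_opt : ∀ ℓ i, (localGame g q lam v ℓ *ᵥ y ℓ) i ≤ v ℓ)
    (bi : Fin n → I) : (Wmat g q k lam (v k) *ᵥ fun bj => ∏ ℓ, y ℓ (bj ℓ)) bi ≤ 0 := by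
  rw [mulVec, dotProduct_comm]
  simp only [dotProduct, Wmat_apply_eq_det]
  refine sum_prod_mul_det_updateCol_nonpos (p := fun ℓ j => q ℓ (bi ℓ) j) (r := 1 - lam)
    (c := fun ℓ j => localGame g q lam v ℓ (bi ℓ) j - v ℓ)
    (fun _ _ => hq _ _ _) hy (by linarith) (by linarith) (fun ℓ => ?_) k
  have := hy_opt ℓ (bi ℓ)
  simp only [mul_sub, sum_sub_distrib, ← sum_mul, (hy ℓ).2, one_mul]
  simpa [mulVec, dotProduct, mul_comm] using this

theorem vecMul_Wmat_nonneg [Fintype I] (hq : ∀ ℓ i j, q ℓ i j ∈ stdSimplex ℝ (Fin n))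
    (hl0 : 0 < lam) (hl1 : lam ≤ 1) (k : Fin n) (v : Fin n → ℝ) {x : Fin n → I → ℝ}
    (hx : ∀ ℓ, x ℓ ∈ stdSimplex ℝ I) (hx_opt : ∀ ℓ j, v ℓ ≤ (x ℓ ᵥ* localGame g q lam v ℓ) j)
    (bj : Fin n → J) : 0 ≤ ((fun bi => ∏ ℓ, x ℓ (bi ℓ)) ᵥ* Wmat g q k lam (v k)) bj := by
  simp only [vecMul, dotProduct, Wmat_apply_eq_det]
  refine sum_prod_mul_det_updateCol_nonneg (p := fun ℓ i => q ℓ i (bj ℓ)) (r := 1 - lam)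
    (c := fun ℓ i => localGame g q lam v ℓ i (bj ℓ) - v ℓ)
    (fun _ _ => hq _ _ _) hx (by linarith) (by linarith) (fun ℓ => ?_) k
  have := hx_opt ℓ (bj ℓ)
  simp only [mul_sub, sum_sub_distrib, ← sum_mul, (hx ℓ).2, one_mul]
  simpa [vecMul, dotProduct] using this

variable [Fintype I] [Fintype J] [Nonempty I] [Nonempty J]

theorem matVal_Wmat_eq_zero (hq : ∀ ℓ i j, q ℓ i j ∈ stdSimplex ℝ (Fin n)) (hl0 : 0 < lam)
    (hl1 : lam ≤ 1) (k : Fin n) {v : Fin n → ℝ} (hv : shapley g q lam v = v) :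
    matVal (Wmat g q k lam (v k)) = 0 := by
  choose x hx y hy hx_opt hy_opt using fun ℓ => exists_optimal_strategies (localGame g q lam v ℓ)
  have hval (ℓ : Fin n) : matVal (localGame g q lam v ℓ) = v ℓ := congrFun hv ℓ
  simp only [hval] at hx_opt hy_opt
  exact le_antisymm
    (matVal_le (prod_mem_stdSimplex hy) (mulVec_Wmat_nonpos hq hl0 hl1 k v hy hy_opt))
    (le_matVal (prod_mem_stdSimplex hx) (vecMul_Wmat_nonneg hq hl0 hl1 k v hx hx_opt))

theorem strictAnti_matVal_Wmat (hq : ∀ ℓ i j, q ℓ i j ∈ stdSimplex ℝ (Fin n)) (hl0 : 0 < lam)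
    (hl1 : lam ≤ 1) (k : Fin n) : StrictAnti fun z => matVal (Wmat g q k lam z) :=
  fun _ _ h => matVal_lt_matVal fun bi bj => by
    simp only [Wmat, of_apply]
    nlinarith [d0_pos hq hl0 hl1 bi bj]

end StochasticGame

/-- **Theorem 1.** The equation `val W^k_λ(z) = 0` has exactly one real solution, which
is the `λ`-discounted value `v^k_λ`, i.e. the `k`-th coordinate of the fixed point of
the Shapley operator. -/
theorem stmt15 (n : ℕ) (I J : Type) [Fintype I] [Fintype J] [Nonempty I] [Nonempty J]
    (g : Fin n → I → J → ℝ) (q : Fin n → I → J → Fin n → ℝ)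
    (hq0 : ∀ ℓ i j ℓ', 0 ≤ q ℓ i j ℓ') (hq1 : ∀ ℓ i j, ∑ ℓ', q ℓ i j ℓ' = 1)
    (lam : ℝ) (hl0 : 0 < lam) (hl1 : lam ≤ 1) (k : Fin n)
    (v : Fin n → ℝ) (hv : shapley g q lam v = v) :
    ∀ z : ℝ, matVal (Wmat g q k lam z) = 0 ↔ z = v k := by
  have hq (ℓ : Fin n) (i : I) (j : J) : q ℓ i j ∈ stdSimplex ℝ (Fin n) := ⟨hq0 ℓ i j, hq1 ℓ i j⟩
  intro z
  rw [← matVal_Wmat_eq_zero hq hl0 hl1 k hv]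
  exact (strictAnti_matVal_Wmat hq hl0 hl1 k).injective.eq_iff
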